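/- In the two-configuration probability-ε protocol, if prisoners finish at all, they must finish in the order p_0, p_1, ..., p_{n-1}: prisoner p_k cannot complete his startup phase (which requires his imbalance to reach r+k) until prisoners p_0,...,p_{k-1} have all finished (each having imbalance -1), since the total imbalance over all prisoners is always between 0 and r. -/
import Mathlib


/-- Global state of the probability-ε protocol: the binary room configurations
(`false = 0`, `true = 1`), each prisoner's local program state (phase, loop
counter), and the declaration flag. -/
structure EState (n r : ℕ) where
  rooms : Fin r → Bool
  loc : Fin n → ℕ × ℕ
  declared : Bool

/-- Prisoner `p_k`'s algorithm. Phase 0 (startup): flip `0 → 1` a total of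
`r + k` times. Phase 1 and 2 (check): flip `1 → 0` `r` times, then `0 → 1`
`r` times. Phase 3 (cooldown, only for `k ≠ n-1`): flip `1 → 0` a total of
`r + k + 1` times; completing it, `p_k` is finished (phase 4). Prisoner
`p_{n-1}` instead declares at the end of his check phase (also phase 4).
Returns (new local state, configuration left in the room, declare?). -/
def epsAct (n r k : ℕ) (st : ℕ × ℕ) (c : Bool) : (ℕ × ℕ) × Bool × Bool :=
  match st.1 with
  | 0 => if c = false then
           (if st.2 + 1 = r + k then ((1, 0), true, false)
            else ((0, st.2 + 1), true, false))
         else (st, c, false)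
  | 1 => if c = true then
           (if st.2 + 1 = r then ((2, 0), false, false)
            else ((1, st.2 + 1), false, false))
         else (st, c, false)
  | 2 => if c = false then
           (if st.2 + 1 = r then
              (if k + 1 = n then ((4, 0), true, true) else ((3, 0), true, false))
            else ((2, st.2 + 1), true, false))
         else (st, c, false)
  | 3 => if c = true then
           (if st.2 + 1 = r + k + 1 then ((4, 0), false, false)
            else ((3, st.2 + 1), false, false))
         else (st, c, false)
  | _ => (st, c, false)

/-- One visit of prisoner `v.1` to room `v.2`. -/
def epsStep {n r : ℕ} (v : Fin n × Fin r) (s : EState n r) : EState n r :=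
  let a := epsAct n r v.1 (s.loc v.1) (s.rooms v.2)
  { rooms := Function.update s.rooms v.2 a.2.1
    loc := Function.update s.loc v.1 a.1
    declared := s.declared || a.2.2 }

/-- The state after `t` visits; all rooms start in configuration `0`. -/
def epsRun {n r : ℕ} (sch : ℕ → Fin n × Fin r) : ℕ → EState n r
  | 0 => ⟨fun _ => false, fun _ => (0, 0), false⟩
  | t + 1 => epsStep (sch t) (epsRun sch t)

def imbZ (n r k : ℕ) (st : ℕ × ℕ) : ℤ :=
  match st.1 with
  | 0 => st.2
  | 1 => (r : ℤ) + k - st.2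
  | 2 => (k : ℤ) + st.2
  | 3 => (r : ℤ) + k - st.2
  | _ => if k + 1 = n then (r : ℤ) + k else -1

def Bounds (n r k : ℕ) (st : ℕ × ℕ) : Prop :=
  (st.1 = 0 → st.2 < r + k) ∧
  (st.1 = 1 → st.2 < r) ∧
  (st.1 = 2 → st.2 < r) ∧
  (st.1 = 3 → st.2 ≤ r + k ∧ k + 1 ≠ n) ∧
  st.1 ≤ 4

lemma imb_ge_neg_one {n r k : ℕ} {st : ℕ × ℕ} (hB : Bounds n r k st) :
    -1 ≤ imbZ n r k st := by
  obtain ⟨ph, c⟩ := st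
  obtain ⟨h0, h1, h2, h3, h4⟩ := hB
  interval_cases ph <;> simp_all [imbZ] <;> first | omega | (split_ifs <;> omega)

lemma imb_eq_neg_one {n r k : ℕ} {st : ℕ × ℕ} (hB : Bounds n r k st)
    (h : imbZ n r k st = -1) : st.1 = 4 := by
  obtain ⟨ph, c⟩ := st
  obtain ⟨h0, h1, h2, h3, h4⟩ := hB
  interval_cases ph <;> simp_all [imbZ] <;> first | omega | (split_ifs at h <;> omega)

lemma act_spec (n r k : ℕ) (hr : 0 < r) (st : ℕ × ℕ) (b : Bool)
    (hB : Bounds n r k st) :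
    Bounds n r k (epsAct n r k st b).1 ∧
    imbZ n r k (epsAct n r k st b).1
      = imbZ n r k st
        + ((if (epsAct n r k st b).2.1 then (1:ℤ) else 0) - (if b then (1:ℤ) else 0)) ∧
    (st.1 = 4 → (epsAct n r k st b).1 = st ∧ (epsAct n r k st b).2.1 = b) ∧
    (1 ≤ (epsAct n r k st b).1.1 →
        1 ≤ st.1 ∨ (st.1 = 0 ∧ b = false ∧ imbZ n r k st = (r:ℤ) + k - 1)) := by
  obtain ⟨ph, c⟩ := st
  obtain ⟨h0, h1, h2, h3, h4⟩ := hB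
  interval_cases ph <;> cases b <;>
    simp_all [epsAct, imbZ, Bounds] <;>
    split_ifs <;> simp_all <;> omega

lemma sum_update_int {α : Type*} [Fintype α] [DecidableEq α] (f : α → ℤ) (i : α) (b : ℤ) :
    ∑ x, Function.update f i b x = (∑ x, f x) + (b - f i) := by
  rw [Finset.sum_update_of_mem (Finset.mem_univ i),
    ← Finset.add_sum_erase _ f (Finset.mem_univ i), Finset.sdiff_singleton_eq_erase]
  ring

lemma crit {n r : ℕ} (loc : Fin n → ℕ × ℕ) (rooms : Fin r → Bool)
    (hB : ∀ k : Fin n, Bounds n r k (loc k))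
    (hS : (∑ k : Fin n, imbZ n r k (loc k))
            = ∑ i : Fin r, if rooms i then (1:ℤ) else 0)
    (hC : ∀ k j : Fin n, j < k → 1 ≤ (loc k).1 → (loc j).1 = 4)
    (p : Fin n) (q : Fin r) (hq : rooms q = false)
    (hp : imbZ n r p (loc p) = (r:ℤ) + p - 1) :
    ∀ j : Fin n, j < p → (loc j).1 = 4 := by
  classical
  set D := Finset.univ.filter (fun j : Fin n => imbZ n r j (loc j) = -1) with hD
  -- room sum bound
  have hroom : (∑ i : Fin r, if rooms i then (1:ℤ) else 0) ≤ (r : ℤ) - 1 := by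
    rw [← Finset.add_sum_erase _ _ (Finset.mem_univ q), hq]
    have h1 : ∑ i ∈ Finset.univ.erase q, (if rooms i then (1:ℤ) else 0)
        ≤ ((Finset.univ.erase q).card : ℤ) := by
      calc ∑ i ∈ Finset.univ.erase q, (if rooms i then (1:ℤ) else 0)
          ≤ ∑ _i ∈ Finset.univ.erase q, (1:ℤ) := by
            apply Finset.sum_le_sum; intro i _; split <;> norm_num
        _ = ((Finset.univ.erase q).card : ℤ) := by simp
    have h2 : (Finset.univ.erase q).card = r - 1 := by
      rw [Finset.card_erase_of_mem (Finset.mem_univ q)]; simp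
    have hr1 : 1 ≤ r := q.pos
    simp only [h2] at h1
    have : ((r - 1 : ℕ) : ℤ) = (r : ℤ) - 1 := by omega
    simp only [this] at h1
    simpa using h1
  -- lower bound on the sum
  have hlow : imbZ n r p (loc p) - (D.card : ℤ) ≤ ∑ k : Fin n, imbZ n r k (loc k) := by
    have hsplit : ∑ k : Fin n, imbZ n r k (loc k)
        = imbZ n r p (loc p) + ∑ k ∈ Finset.univ.erase p, imbZ n r k (loc k) :=
      (Finset.add_sum_erase _ _ (Finset.mem_univ p)).symm
    have h1 : -(D.card : ℤ) ≤ ∑ k ∈ Finset.univ.erase p, imbZ n r k (loc k) := by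
      set T := Finset.univ.erase p with hT
      rw [← Finset.sum_filter_add_sum_filter_not T
        (fun j : Fin n => imbZ n r j (loc j) = -1)]
      have e1 : ∑ k ∈ T.filter (fun j : Fin n => imbZ n r j (loc j) = -1),
          imbZ n r k (loc k) = -((T.filter (fun j : Fin n => imbZ n r j (loc j) = -1)).card : ℤ) := by
        rw [Finset.sum_congr rfl (fun x hx => (Finset.mem_filter.mp hx).2)]
        simp
      have e2 : (T.filter (fun j : Fin n => imbZ n r j (loc j) = -1)).card ≤ D.card := by
        apply Finset.card_le_card
        intro x hx
        rw [hD, Finset.mem_filter]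
        exact ⟨Finset.mem_univ x, (Finset.mem_filter.mp hx).2⟩
      have e3 : 0 ≤ ∑ k ∈ T.filter (fun j : Fin n => ¬ imbZ n r j (loc j) = -1),
          imbZ n r k (loc k) := by
        apply Finset.sum_nonneg
        intro x hx
        have := imb_ge_neg_one (hB x)
        have hne := (Finset.mem_filter.mp hx).2
        omega
      rw [e1]
      have : -((T.filter (fun j : Fin n => imbZ n r j (loc j) = -1)).card : ℤ)
          ≥ -(D.card : ℤ) := by exact_mod_cast neg_le_neg (by exact_mod_cast e2)
      omega
    omega
  have hcard : (p : ℕ) ≤ D.card := by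
    rw [hS] at hlow
    rw [hp] at hlow
    omega
  intro j hjp
  by_contra hne
  have hsub : ∀ i ∈ D, (i : ℕ) < (j : ℕ) := by
    intro i hi
    have h4i : (loc i).1 = 4 :=
      imb_eq_neg_one (hB i) (Finset.mem_filter.mp hi).2
    by_contra hge
    rcases Nat.lt_or_ge (j : ℕ) (i : ℕ) with h | h
    · have := hC i j h (by rw [h4i]; norm_num)
      exact hne this
    · have : (i : ℕ) = (j : ℕ) := by omega
      exact hne (by rw [← Fin.val_injective this]; exact h4i)
  have hle : D.card ≤ (j : ℕ) := by
    have := Finset.card_le_card_of_injOn (fun i : Fin n => (i : ℕ))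
      (fun i hi => Finset.mem_range.mpr (hsub i hi)) (Fin.val_injective.injOn)
    simpa using this
  have : (j : ℕ) < (p : ℕ) := hjp
  omega

def Good (n r : ℕ) (s : EState n r) : Prop :=
  (∀ k : Fin n, Bounds n r k (s.loc k)) ∧
  (∑ k : Fin n, imbZ n r k (s.loc k)) = (∑ i : Fin r, if s.rooms i then (1:ℤ) else 0) ∧
  (∀ k j : Fin n, j < k → 1 ≤ (s.loc k).1 → (s.loc j).1 = 4)

lemma good_step {n r : ℕ} (hr : 0 < r) (v : Fin n × Fin r) (s : EState n r)
    (hs : Good n r s) : Good n r (epsStep v s) := by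
  classical
  obtain ⟨hB, hS, hC⟩ := hs
  obtain ⟨p, q⟩ := v
  obtain ⟨sB, sSum, s4, sPh⟩ := act_spec n r p hr (s.loc p) (s.rooms q) (hB p)
  set a := epsAct n r p (s.loc p) (s.rooms q) with ha
  have hloc : (epsStep (p, q) s).loc = Function.update s.loc p a.1 := rfl
  have hrooms : (epsStep (p, q) s).rooms = Function.update s.rooms q a.2.1 := rfl
  refine ⟨?_, ?_, ?_⟩
  · intro k
    rw [hloc]
    rcases eq_or_ne k p with rfl | hk
    · simpa using sB
    · rw [Function.update_of_ne hk]; exact hB k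
  · rw [hloc, hrooms]
    have e1 : ∑ k : Fin n, imbZ n r k (Function.update s.loc p a.1 k)
        = (∑ k : Fin n, imbZ n r k (s.loc k)) + (imbZ n r p a.1 - imbZ n r p (s.loc p)) := by
      rw [show (fun k : Fin n => imbZ n r k (Function.update s.loc p a.1 k))
          = Function.update (fun k : Fin n => imbZ n r k (s.loc k)) p (imbZ n r p a.1) from ?_]
      · exact sum_update_int _ _ _
      · funext k
        rcases eq_or_ne k p with rfl | hk
        · simp
        · rw [Function.update_of_ne hk, Function.update_of_ne hk]
    have e2 : ∑ i : Fin r, (if Function.update s.rooms q a.2.1 i then (1:ℤ) else 0)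
        = (∑ i : Fin r, if s.rooms i then (1:ℤ) else 0)
          + ((if a.2.1 then (1:ℤ) else 0) - (if s.rooms q then (1:ℤ) else 0)) := by
      rw [show (fun i : Fin r => if Function.update s.rooms q a.2.1 i then (1:ℤ) else 0)
          = Function.update (fun i : Fin r => if s.rooms i then (1:ℤ) else 0) q
              (if a.2.1 then (1:ℤ) else 0) from ?_]
      · exact sum_update_int _ _ _
      · funext i
        rcases eq_or_ne i q with rfl | hi
        · simp
        · rw [Function.update_of_ne hi, Function.update_of_ne hi]
    rw [e1, e2, hS, sSum]
    ring
  · intro k j hjk h1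
    rw [hloc] at h1 ⊢
    have hjne : j ≠ k := ne_of_lt hjk
    rcases eq_or_ne k p with rfl | hk
    · -- acting prisoner is k
      rw [Function.update_self] at h1
      rw [Function.update_of_ne hjne]
      rcases sPh h1 with hold | ⟨_, hq0, himb⟩
      · exact hC k j hjk hold
      · exact crit s.loc s.rooms hB hS hC k q hq0 himb j hjk
    · rw [Function.update_of_ne hk] at h1
      rcases eq_or_ne j p with rfl | hj
      · rw [Function.update_self]
        have h4 : (s.loc j).1 = 4 := hC k j hjk h1
        exact ((s4 h4).1).symm ▸ h4
      · rw [Function.update_of_ne hj]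
        exact hC k j hjk h1

/-- in the probability-ε protocol, prisoners can only finish in
the order `p_0, p_1, ..., p_{n-1}`; more precisely, prisoner `p_k` cannot have
completed his startup phase (phase `≥ 1`) at any time unless every prisoner
`p_j` with `j < k` has already finished (phase `4`); in particular if `p_k` is
finished then so is every `p_j` with `j < k`. -/
theorem eps_finish_in_order (n r : ℕ) (hr : 0 < r) (sch : ℕ → Fin n × Fin r) :
    (∀ (t : ℕ) (k j : Fin n), j < k →
        1 ≤ ((epsRun sch t).loc k).1 → ((epsRun sch t).loc j).1 = 4) ∧
    (∀ (t : ℕ) (k j : Fin n), j < k →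
        ((epsRun sch t).loc k).1 = 4 → ((epsRun sch t).loc j).1 = 4) := by
  have good : ∀ t, Good n r (epsRun sch t) := by
    intro t
    induction t with
    | zero =>
      refine ⟨fun k => ?_, ?_, ?_⟩
      · have hk : (epsRun sch 0).loc k = (0, 0) := rfl
        rw [hk]
        refine ⟨fun _ => ?_, fun h => ?_, fun h => ?_, fun h => ?_, ?_⟩ <;>
          simp_all <;> omega
      · simp [epsRun, imbZ]
      · intro k j _ h1
        simp [epsRun] at h1
    | succ t ih => exact good_step hr (sch t) _ ih
  constructor
  · intro t k j hjk h1
    exact (good t).2.2 k j hjk h1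
  · intro t k j hjk h4
    exact (good t).2.2 k j hjk (by omega)
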